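/- arXiv:2106.06888 — 4 statements merged into one kernel-verified Lean document; each statement's English description precedes it below -/
import Mathlib

section
/- (Reformulation of the BKL relation; used in the proof of Theorem 3.2.) For each fixed e ∈ {1, −1}, the BKL relation ∑_{n=0}^{1−c} (−1)^{n+c} B_i^{(n)} B_{τi} B_i^{(1−c−n)} = (q_i − q_i^{-1})^{-1} ( q_i^{c} (q_i^{-2}; q_i^{-2})_{−c} B_i^{(−c)} k̃_i − (q_i^{2}; q_i^{2})_{−c} B_i^{(−c)} k̃_{τi} ) holds in A if and only if ỹ_{1−c,e} = 0; equivalently, the BKL relation holds if and only if ∑_{r+s=1−c, r,s≥0} (−1)^{r+c} B_i^{(r)} B_{τi} B_i^{(s)} = [−c]! (q_i − q_i^{-1})^{−c−1} ( q_i^{(−c²+3c)/2} B_i^{(−c)} k̃_i − (−1)^c q_i^{(c²−c)/2} B_i^{(−c)} k̃_{τi} ). Here (a; x)_n = ∏_{k=0}^{n−1} (1 − a x^k). -/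
noncomputable section

/-- The quantum integer `[n]_v = (v^n - v^{-n})/(v - v^{-1})`. -/
def qint {K : Type*} [Field K] (v : RatFunc K) (n : ℤ) : RatFunc K :=
  (v ^ n - v ^ (-n)) / (v - v⁻¹)

/-- The quantum factorial `[m]_v! = [1]_v [2]_v ⋯ [m]_v`. -/
def qfact {K : Type*} [Field K] (v : RatFunc K) (m : ℕ) : RatFunc K :=
  ∏ k ∈ Finset.range m, qint v ((k : ℤ) + 1)

/-- The q-Pochhammer symbol `(a; x)_n = ∏_{k=0}^{n-1} (1 - a x^k)`. -/
def qpoch {K : Type*} [Field K] (a x : RatFunc K) (n : ℕ) : RatFunc K :=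
  ∏ k ∈ Finset.range n, (1 - a * x ^ k)

/-- The divided power `x^{(m)} = x^m/[m]_v!` for `m ≥ 0`, and `0` for `m < 0`. -/
def dp {K : Type*} [Field K] {A : Type*} [Ring A] [Algebra (RatFunc K) A]
    (v : RatFunc K) (x : A) (m : ℤ) : A :=
  if m < 0 then 0 else (qfact v m.toNat)⁻¹ • x ^ m.toNat

/-- `P_{m,e} = ∏_{j=0}^{c+m−2} (−q_i^{e(2j−c−2m+2)} + q_i^{c−2})`,
an empty product (occurring when `c+m−2 < 0`) being `1`. -/
def Pprod {K : Type*} [Field K] (v : RatFunc K) (c : ℤ) (m : ℕ) (e : ℤ) : RatFunc K :=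
  ∏ j ∈ Finset.range (c + (m : ℤ) - 1).toNat,
    (-(v ^ (e * (2 * (j : ℤ) - c - 2 * (m : ℤ) + 2))) + v ^ (c - 2))

/-- `Q_{m,e} = ∏_{j=0}^{c+m−2} (−q_i^{e(2j−c−2m+2)} + q_i^{2−c})`. -/
def Qprod {K : Type*} [Field K] (v : RatFunc K) (c : ℤ) (m : ℕ) (e : ℤ) : RatFunc K :=
  ∏ j ∈ Finset.range (c + (m : ℤ) - 1).toNat,
    (-(v ^ (e * (2 * (j : ℤ) - c - 2 * (m : ℤ) + 2))) + v ^ (2 - c))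

/-- The element `ỹ_{m,e} = ∑_{r+s=m} (−1)^{r+c} q_i^{er(1−c−m)} B_i^{(r)} B_{τi} B_i^{(s)}
− ([1−c]!/[m]) (q_i−q_i^{-1})^{−c−1} ( P_{m,e} q_i^{(−c²+3c)/2} B_i^{(m−1)} k̃_i
  − (−1)^c Q_{m,e} q_i^{(c²−c)/2} B_i^{(m−1)} k̃_{τi} )`. -/
def ytil {K : Type*} [Field K] {A : Type*} [Ring A] [Algebra (RatFunc K) A]
    (v : RatFunc K) (Bi Bt ki kt : A) (c : ℤ) (m : ℕ) (e : ℤ) : A :=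
  (∑ r ∈ Finset.range (m + 1),
      ((-1 : RatFunc K) ^ ((r : ℤ) + c) * v ^ (e * (r : ℤ) * (1 - c - (m : ℤ)))) •
        (dp v Bi (r : ℤ) * Bt * dp v Bi ((m : ℤ) - (r : ℤ))))
    - (qfact v (1 - c).toNat / qint v (m : ℤ) * (v - v⁻¹) ^ (-c - 1)) •
      ((Pprod v c m e * v ^ ((-c ^ 2 + 3 * c) / 2)) • (dp v Bi ((m : ℤ) - 1) * ki)
        - ((-1 : RatFunc K) ^ c * Qprod v c m e * v ^ ((c ^ 2 - c) / 2)) •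
            (dp v Bi ((m : ℤ) - 1) * kt))

/-- The order-reversed element `ỹ'_{m,e}`. -/
def ytil' {K : Type*} [Field K] {A : Type*} [Ring A] [Algebra (RatFunc K) A]
    (v : RatFunc K) (Bi Bt ki kt : A) (c : ℤ) (m : ℕ) (e : ℤ) : A :=
  (∑ r ∈ Finset.range (m + 1),
      ((-1 : RatFunc K) ^ ((r : ℤ) + c) * v ^ (e * (r : ℤ) * (1 - c - (m : ℤ)))) •
        (dp v Bi ((m : ℤ) - (r : ℤ)) * Bt * dp v Bi (r : ℤ)))
    - (qfact v (1 - c).toNat / qint v (m : ℤ) * (v - v⁻¹) ^ (-c - 1)) •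
      ((Pprod v c m e * v ^ ((-c ^ 2 + 3 * c) / 2)) • (kt * dp v Bi ((m : ℤ) - 1))
        - ((-1 : RatFunc K) ^ c * Qprod v c m e * v ^ ((c ^ 2 - c) / 2)) •
            (ki * dp v Bi ((m : ℤ) - 1)))

/-- The BKL relation
`∑_{n=0}^{1−c} (−1)^{n+c} B_i^{(n)} B_{τi} B_i^{(1−c−n)}
 = (q_i−q_i^{-1})^{-1} ( q_i^c (q_i^{-2};q_i^{-2})_{−c} B_i^{(−c)} k̃_i
   − (q_i^2;q_i^2)_{−c} B_i^{(−c)} k̃_{τi} )`. -/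
def BKL {K : Type*} [Field K] {A : Type*} [Ring A] [Algebra (RatFunc K) A]
    (v : RatFunc K) (Bi Bt ki kt : A) (c : ℤ) : Prop :=
  ∑ n ∈ Finset.range ((1 - c).toNat + 1),
      ((-1 : RatFunc K) ^ ((n : ℤ) + c)) • (dp v Bi (n : ℤ) * Bt * dp v Bi (1 - c - (n : ℤ)))
    = (v - v⁻¹)⁻¹ •
        ((v ^ c * qpoch (v ^ (-2 : ℤ)) (v ^ (-2 : ℤ)) (-c).toNat) • (dp v Bi (-c) * ki)
          - qpoch (v ^ (2 : ℤ)) (v ^ (2 : ℤ)) (-c).toNat • (dp v Bi (-c) * kt))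

section Aux

variable {K : Type*} [Field K] {v : RatFunc K}
  (hv0 : v ≠ 0) (hz : ∀ m : ℤ, v ^ m = 1 → m = 0)

include hv0 hz

lemma aux_d_ne : v - v⁻¹ ≠ 0 := by
  intro h
  have h1 : v = v⁻¹ := sub_eq_zero.mp h
  have h2 : v ^ (2 : ℤ) = 1 := by
    rw [show (2:ℤ) = 1 + 1 from rfl, zpow_add₀ hv0, zpow_one]
    nth_rewrite 2 [h1]
    exact mul_inv_cancel₀ hv0
  exact two_ne_zero (hz 2 h2)

lemma aux_pow_ne (N : ℤ) (hN : N ≠ 0) : v ^ N - v ^ (-N) ≠ 0 := by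
  intro h
  have h1 : v ^ N = v ^ (-N) := sub_eq_zero.mp h
  have h2 : v ^ (N + N) = 1 := by
    rw [zpow_add₀ hv0]
    nth_rewrite 2 [h1]
    rw [← zpow_add₀ hv0, add_neg_cancel, zpow_zero]
  have := hz _ h2; omega


lemma aux_qint_ne (N : ℤ) (hN : N ≠ 0) : qint v N ≠ 0 :=
  div_ne_zero (aux_pow_ne hv0 hz N hN) (aux_d_ne hv0 hz)

lemma aux_qfact_ne (n : ℕ) : qfact v n ≠ 0 :=
  Finset.prod_ne_zero_iff.mpr fun k _ => aux_qint_ne hv0 hz _ (by omega)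

lemma aux_qfact_pow (n : ℕ) :
    qfact v n * (v - v⁻¹) ^ n = ∏ k ∈ Finset.range n, (v ^ ((k:ℤ) + 1) - v ^ (-((k:ℤ) + 1))) := by
  unfold qfact qint
  rw [Finset.prod_div_distrib, Finset.prod_const, Finset.card_range, div_mul_cancel₀]
  exact pow_ne_zero _ (aux_d_ne hv0 hz)

omit hv0 hz in
lemma aux_gauss : ∀ N : ℕ, N * (N + 1) = 2 * ∑ k ∈ Finset.range N, (k + 1) := by
  intro N
  induction N with
  | zero => simp
  | succ m ih => rw [Finset.sum_range_succ, Nat.mul_add]; ring_nf; ring_nf at ih; omega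

lemma aux_idA (n : ℕ) :
    qfact v n * (v - v⁻¹) ^ n
      = v ^ ((∑ k ∈ Finset.range n, (k + 1) : ℕ) : ℤ) * qpoch (v ^ (-2:ℤ)) (v ^ (-2:ℤ)) n := by
  rw [aux_qfact_pow hv0 hz, zpow_natCast, ← Finset.prod_pow_eq_pow_sum]
  unfold qpoch
  rw [← Finset.prod_mul_distrib]
  refine Finset.prod_congr rfl fun k _ => ?_
  have e1 : v ^ (k + 1) = v ^ ((k:ℤ) + 1) := by
    rw [← zpow_natCast]; norm_cast
  have e2 : v ^ (-2:ℤ) * (v ^ (-2:ℤ)) ^ k = v ^ (-2 * (k:ℤ) - 2) := by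
    rw [← zpow_natCast (v ^ (-2:ℤ)) k, ← zpow_mul, ← zpow_add₀ hv0]; congr 1; ring
  have e4 : v ^ ((k:ℤ) + 1) * v ^ (-2 * (k:ℤ) - 2) = v ^ (-((k:ℤ) + 1)) := by
    rw [← zpow_add₀ hv0]; congr 1; ring
  rw [e1, e2]; linear_combination e4

lemma aux_idB (n : ℕ) :
    qfact v n * (v - v⁻¹) ^ n
      = (-1 : RatFunc K) ^ n * (v ^ ((∑ k ∈ Finset.range n, (k + 1) : ℕ) : ℤ))⁻¹
        * qpoch (v ^ (2:ℤ)) (v ^ (2:ℤ)) n := by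
  rw [aux_qfact_pow hv0 hz, zpow_natCast, ← inv_pow, ← Finset.prod_pow_eq_pow_sum]
  have h1 : ((-1:RatFunc K)) ^ n = ∏ _k ∈ Finset.range n, (-1 : RatFunc K) := by simp
  unfold qpoch
  rw [h1, ← Finset.prod_mul_distrib, ← Finset.prod_mul_distrib]
  refine Finset.prod_congr rfl fun k _ => ?_
  have e1 : v⁻¹ ^ (k + 1) = v ^ (-((k:ℤ) + 1)) := by
    rw [inv_pow, ← zpow_natCast, ← zpow_neg]; norm_cast
  have e2 : v ^ (2:ℤ) * (v ^ (2:ℤ)) ^ k = v ^ (2 * (k:ℤ) + 2) := by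
    rw [← zpow_natCast (v ^ (2:ℤ)) k, ← zpow_mul, ← zpow_add₀ hv0]; congr 1; ring
  have e4 : v ^ (-((k:ℤ) + 1)) * v ^ (2 * (k:ℤ) + 2) = v ^ ((k:ℤ) + 1) := by
    rw [← zpow_add₀ hv0]; congr 1; ring
  rw [e1, e2]; linear_combination -1 * e4

end Aux

/-- (Reformulation of the BKL relation; used in the proof of Theorem 3.2.)
For each fixed e ∈ {1, −1}, the BKL relation holds iff ỹ_{1−c,e} = 0; equivalently,
the BKL relation holds iff
∑_{r+s=1−c} (−1)^{r+c} B_i^{(r)} B_{τi} B_i^{(s)}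
= [−c]! (q_i−q_i^{-1})^{−c−1} ( q_i^{(−c²+3c)/2} B_i^{(−c)} k̃_i
  − (−1)^c q_i^{(c²−c)/2} B_i^{(−c)} k̃_{τi} ). -/
theorem stmt8 {K : Type*} [Field K] [CharZero K]
    {A : Type*} [Ring A] [Algebra (RatFunc K) A]
    (ε : ℕ) (hε : 0 < ε) (v : RatFunc K) (hv : v = RatFunc.X ^ ε)
    (Bi Bt ki kt : A) (c : ℤ) (hc : c ≤ 0)
    (hki : ki * Bi = v ^ (c - 2) • (Bi * ki))
    (hkt : kt * Bi = v ^ (2 - c) • (Bi * kt))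
    (e : ℤ) (he : e = 1 ∨ e = -1) :
    (BKL v Bi Bt ki kt c ↔ ytil v Bi Bt ki kt c (1 - c).toNat e = 0) ∧
    (BKL v Bi Bt ki kt c ↔
      ∑ r ∈ Finset.range ((1 - c).toNat + 1),
          ((-1 : RatFunc K) ^ ((r : ℤ) + c)) •
            (dp v Bi (r : ℤ) * Bt * dp v Bi (1 - c - (r : ℤ)))
        = (qfact v (-c).toNat * (v - v⁻¹) ^ (-c - 1)) •
            ((v ^ ((-c ^ 2 + 3 * c) / 2)) • (dp v Bi (-c) * ki)
              - ((-1 : RatFunc K) ^ c * v ^ ((c ^ 2 - c) / 2)) • (dp v Bi (-c) * kt))) := by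
  clear hki hkt he
  -- basic nonvanishing facts about v
  have hXne : ∀ m : ℕ, 0 < m → (RatFunc.X : RatFunc K) ^ m ≠ 1 := by
    intro m hm h
    rw [← RatFunc.algebraMap_X, ← map_pow,
      ← map_one (algebraMap (Polynomial K) (RatFunc K))] at h
    have h2 := RatFunc.algebraMap_injective K h
    have h3 := congrArg Polynomial.natDegree h2
    simp [Polynomial.natDegree_X_pow] at h3
    omega
  have hv0 : v ≠ 0 := by
    rw [hv]; exact pow_ne_zero _ RatFunc.X_ne_zero
  have hzn : ∀ m : ℕ, v ^ (m : ℤ) = 1 → m = 0 := by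
    intro m hm
    by_contra hm0
    refine hXne (ε * m) (Nat.mul_pos hε (Nat.pos_of_ne_zero hm0)) ?_
    rw [pow_mul, ← hv, ← zpow_natCast, hm]
  have hz : ∀ m : ℤ, v ^ m = 1 → m = 0 := by
    intro m hm
    rcases le_or_gt 0 m with h | h
    · have h1 : v ^ ((m.toNat : ℕ) : ℤ) = 1 := by rw [Int.toNat_of_nonneg h]; exact hm
      have := hzn _ h1; omega
    · have h1 : v ^ (-m) = 1 := by rw [zpow_neg, hm, inv_one]
      have h2 : v ^ (((-m).toNat : ℕ) : ℤ) = 1 := by rw [Int.toNat_of_nonneg (by omega)]; exact h1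
      have := hzn _ h2; omega
  clear hv hXne hzn hε
  obtain ⟨n, rfl⟩ : ∃ n : ℕ, c = -(n : ℤ) := ⟨(-c).toNat, by omega⟩
  clear hc
  have hd : v - v⁻¹ ≠ 0 := aux_d_ne hv0 hz
  set T : ℕ := ∑ k ∈ Finset.range n, (k + 1) with hTdef
  have hg : (n : ℤ) * ((n : ℤ) + 1) = 2 * (T : ℤ) := by exact_mod_cast aux_gauss n
  have hE1 : (-(-(n:ℤ)) ^ 2 + 3 * (-(n:ℤ))) / 2 = -(n:ℤ) - (T:ℤ) := by
    have h2 : (-(-(n:ℤ)) ^ 2 + 3 * (-(n:ℤ))) = 2 * (-(n:ℤ) - (T:ℤ)) := by linear_combination -hg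
    rw [h2, Int.mul_ediv_cancel_left _ two_ne_zero]
  have hE2 : ((-(n:ℤ)) ^ 2 - (-(n:ℤ))) / 2 = (T:ℤ) := by
    have h2 : ((-(n:ℤ)) ^ 2 - (-(n:ℤ))) = 2 * (T:ℤ) := by linear_combination hg
    rw [h2, Int.mul_ediv_cancel_left _ two_ne_zero]
  have hsign : ((-1 : RatFunc K)) ^ (-(n:ℤ)) = (-1 : RatFunc K) ^ n := by
    rw [zpow_neg, zpow_natCast, ← inv_pow, inv_neg, inv_one]
  have hA' : (v - v⁻¹)⁻¹ * (v ^ (-(n:ℤ)) * qpoch (v ^ (-2:ℤ)) (v ^ (-2:ℤ)) n)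
      = qfact v n * (v - v⁻¹) ^ (-(-(n:ℤ)) - 1) * v ^ (-(n:ℤ) - (T:ℤ)) := by
    have key := aux_idA hv0 hz n
    rw [show (-(-(n:ℤ)) - 1) = (n:ℤ) - 1 by omega, zpow_sub_one₀ hd, zpow_natCast]
    have hvT : v ^ (-(n:ℤ) - (T:ℤ)) = v ^ (-(n:ℤ)) * (v ^ ((T:ℕ) : ℤ))⁻¹ := by
      rw [zpow_sub₀ hv0, div_eq_mul_inv]
    have hPw : v ^ ((T:ℕ) : ℤ) * (v ^ ((T:ℕ) : ℤ))⁻¹ = 1 := mul_inv_cancel₀ (zpow_ne_zero _ hv0)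
    rw [hvT]
    linear_combination (-((v - v⁻¹)⁻¹ * v ^ (-(n:ℤ)) * (v ^ ((T:ℕ) : ℤ))⁻¹)) * key
      - ((v - v⁻¹)⁻¹ * v ^ (-(n:ℤ)) * qpoch (v ^ (-2:ℤ)) (v ^ (-2:ℤ)) n) * hPw
  have hB' : (v - v⁻¹)⁻¹ * qpoch (v ^ (2:ℤ)) (v ^ (2:ℤ)) n
      = qfact v n * (v - v⁻¹) ^ (-(-(n:ℤ)) - 1) * ((-1 : RatFunc K) ^ n * v ^ ((T:ℕ) : ℤ)) := by
    have key := aux_idB hv0 hz n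
    rw [show (-(-(n:ℤ)) - 1) = (n:ℤ) - 1 by omega, zpow_sub_one₀ hd, zpow_natCast]
    have hsp : (((-1 : RatFunc K)) ^ n * (-1 : RatFunc K) ^ n)
        * ((v ^ ((T:ℕ) : ℤ))⁻¹ * v ^ ((T:ℕ) : ℤ)) = 1 := by
      rw [← pow_add, inv_mul_cancel₀ (zpow_ne_zero _ hv0), mul_one, ← two_mul, pow_mul]
      norm_num
    linear_combination (-((-1 : RatFunc K) ^ n * v ^ ((T:ℕ) : ℤ) * (v - v⁻¹)⁻¹)) * key
      - ((v - v⁻¹)⁻¹ * qpoch (v ^ (2:ℤ)) (v ^ (2:ℤ)) n) * hsp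
  -- normalize the q-factorial quotient appearing in ytil
  have hq : qfact v (n + 1) = qfact v n * qint v ((n:ℤ) + 1) := by
    unfold qfact; rw [Finset.prod_range_succ]
  have hqint : qint v ((n:ℤ) + 1) ≠ 0 := aux_qint_ne hv0 hz _ (by omega)
  -- the main identity between the two right-hand sides
  have main : (v - v⁻¹)⁻¹ •
        ((v ^ (-(n:ℤ)) * qpoch (v ^ (-2 : ℤ)) (v ^ (-2 : ℤ)) (-(-(n:ℤ))).toNat) •
            (dp v Bi (-(-(n:ℤ))) * ki)
          - qpoch (v ^ (2 : ℤ)) (v ^ (2 : ℤ)) (-(-(n:ℤ))).toNat • (dp v Bi (-(-(n:ℤ))) * kt))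
      = (qfact v (-(-(n:ℤ))).toNat * (v - v⁻¹) ^ (-(-(n:ℤ)) - 1)) •
          ((v ^ ((-(-(n:ℤ)) ^ 2 + 3 * (-(n:ℤ))) / 2)) • (dp v Bi (-(-(n:ℤ))) * ki)
            - ((-1 : RatFunc K) ^ (-(n:ℤ)) * v ^ (((-(n:ℤ)) ^ 2 - (-(n:ℤ))) / 2)) •
                (dp v Bi (-(-(n:ℤ))) * kt)) := by
    rw [show ((-(-(n:ℤ))).toNat) = n from by omega, hE1, hE2, hsign]
    simp only [smul_sub, smul_smul]
    rw [hA', hB']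
  -- rewrite ytil at the relevant parameters
  have h1 : ytil v Bi Bt ki kt (-(n:ℤ)) (1 - -(n:ℤ)).toNat e
      = (∑ r ∈ Finset.range ((1 - -(n:ℤ)).toNat + 1),
          ((-1 : RatFunc K) ^ ((r : ℤ) + -(n:ℤ))) •
            (dp v Bi (r : ℤ) * Bt * dp v Bi (1 - -(n:ℤ) - (r : ℤ))))
        - (qfact v (-(-(n:ℤ))).toNat * (v - v⁻¹) ^ (-(-(n:ℤ)) - 1)) •
            ((v ^ ((-(-(n:ℤ)) ^ 2 + 3 * (-(n:ℤ))) / 2)) • (dp v Bi (-(-(n:ℤ))) * ki)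
              - ((-1 : RatFunc K) ^ (-(n:ℤ)) * v ^ (((-(n:ℤ)) ^ 2 - (-(n:ℤ))) / 2)) •
                  (dp v Bi (-(-(n:ℤ))) * kt)) := by
    unfold ytil
    congr 1
    · refine Finset.sum_congr rfl fun r _ => ?_
      have hx : (1 : ℤ) - -(n:ℤ) - (((1 - -(n:ℤ)).toNat : ℕ) : ℤ) = 0 := by omega
      rw [hx, mul_zero, zpow_zero, mul_one,
        show ((((1 - -(n:ℤ)).toNat : ℕ) : ℤ) - (r : ℤ)) = 1 - -(n:ℤ) - (r : ℤ) from by omega]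
    · have hP : Pprod v (-(n:ℤ)) (1 - -(n:ℤ)).toNat e = 1 := by
        unfold Pprod
        rw [show ((-(n:ℤ) + ((1 - -(n:ℤ)).toNat : ℤ) - 1).toNat) = 0 from by omega]
        simp
      have hQ : Qprod v (-(n:ℤ)) (1 - -(n:ℤ)).toNat e = 1 := by
        unfold Qprod
        rw [show ((-(n:ℤ) + ((1 - -(n:ℤ)).toNat : ℤ) - 1).toNat) = 0 from by omega]
        simp
      rw [hP, hQ, mul_one, one_mul,
        show ((((1 - -(n:ℤ)).toNat : ℕ) : ℤ)) = (n:ℤ) + 1 from by omega,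
        show ((1 - -(n:ℤ)).toNat) = n + 1 from by omega,
        show ((n:ℤ) + 1 - 1) = -(-(n:ℤ)) from by omega,
        show ((-(-(n:ℤ))).toNat) = n from by omega,
        hq, mul_div_cancel_right₀ _ hqint]
  constructor
  · rw [h1, sub_eq_zero]
    unfold BKL
    rw [main]
  · unfold BKL
    rw [main]
end
end

section
/- (Corollary 3.3, first identity; analogue of Lusztig's Corollary 3.1.9.) For all integers N, M ≥ 0: B_{τi}^{(N)} B_i^{(M)} = ∑_{t=0}^{min(M,N)} B_i^{(M−t)} ( ∏_{s=1}^{t} (q_i^{2t−N−M−s+1} k̃_i − q_i^{−2t+N+M+s−1} k̃_{τi}) / (q_i^{s} − q_i^{−s}) ) B_{τi}^{(N−t)}. -/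
/-!
Induction on `N`. Moving `B_i` or `B_{τi}` past `q_i^a k̃_i - q_i^{-a} k̃_{τi}` shifts `a` by `2`,
so the commutator relation gives
`B_{τi} B_i^{(m)} = B_i^{(m)} B_{τi} + B_i^{(m-1)} (q_i^{1-m} k̃_i - q_i^{m-1} k̃_{τi}) / (q_i - q_i⁻¹)`.
Multiplying the identity for `N` on the left by `B_{τi}` and using
`B_{τi} B_{τi}^{(N)} = [N+1] B_{τi}^{(N+1)}`, each summand splits in two; after regrouping, the
identity for `N + 1` reduces to a Pascal-type recursion for the products of `k̃`'s in the middle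
(the analogues of Lusztig's `[K; c, t]`), which in turn is the quantum-integer identity
`[n] v^a = [n-t] v^{a-t} + [t] v^{a+n-t}` applied to the coefficients of `k̃_i` and of `k̃_{τi}`.
-/

noncomputable section

lemma RatFunc.intDegree_X_zpow {K : Type*} [Field K] (m : ℤ) :
    ((RatFunc.X : RatFunc K) ^ m).intDegree = m := by
  have hX : (RatFunc.X : RatFunc K) ≠ 0 := RatFunc.X_ne_zero
  induction m using Int.induction_on with
  | zero => simp
  | succ k ih =>
    rw [zpow_add_one₀ hX, RatFunc.intDegree_mul (zpow_ne_zero _ hX) hX, ih, RatFunc.intDegree_X]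
  | pred k ih =>
    rw [zpow_sub_one₀ hX, RatFunc.intDegree_mul (zpow_ne_zero _ hX) (inv_ne_zero hX), ih,
      RatFunc.intDegree_inv, RatFunc.intDegree_X, sub_eq_add_neg]

lemma RatFunc.X_zpow_ne_one {K : Type*} [Field K] {m : ℤ} (hm : m ≠ 0) :
    (RatFunc.X : RatFunc K) ^ m ≠ 1 := fun h =>
  hm (by simpa [h] using (RatFunc.intDegree_X_zpow (K := K) m).symm)

lemma Finset.sum_range_add_shift {M : Type*} [AddCommMonoid M] (f g : ℕ → M) (n : ℕ)
    (hf : f (n + 1) = 0) :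
    ∑ t ∈ range (n + 1), (f t + g t)
      = f 0 + ∑ t ∈ range (n + 1), (f (t + 1) + g t) := by
  rw [sum_add_distrib, sum_add_distrib, ← add_assoc, add_comm (f 0), ← sum_range_succ',
    sum_range_succ _ (n + 1), hf, add_zero]

namespace IQuantum

variable {K : Type*} [Field K]

section Scalars

variable {v : RatFunc K} (hv0 : v ≠ 0) (hv : ∀ n : ℤ, n ≠ 0 → v ^ n ≠ 1)
include hv0 hv

lemma zpow_sub_zpow_neg_ne_zero {n : ℤ} (hn : n ≠ 0) : v ^ n - v ^ (-n) ≠ 0 := by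
  rw [sub_ne_zero]
  intro h
  apply hv (n + n) (by omega)
  rw [zpow_add₀ hv0]
  nth_rw 1 [h]
  rw [← zpow_add₀ hv0, neg_add_cancel, zpow_zero]

lemma sub_inv_ne_zero : v - v⁻¹ ≠ 0 := by
  simpa using zpow_sub_zpow_neg_ne_zero hv0 hv one_ne_zero

lemma qint_ne_zero {n : ℤ} (hn : n ≠ 0) : qint v n ≠ 0 :=
  div_ne_zero (zpow_sub_zpow_neg_ne_zero hv0 hv hn) (sub_inv_ne_zero hv0 hv)

lemma sub_inv_mul_qint (n : ℤ) : (v - v⁻¹) * qint v n = v ^ n - v ^ (-n) :=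
  mul_div_cancel₀ _ (sub_inv_ne_zero hv0 hv)

lemma qint_one : qint v 1 = 1 := by
  rw [qint, zpow_one, zpow_neg_one, div_self (sub_inv_ne_zero hv0 hv)]

end Scalars

lemma qint_zero {v : RatFunc K} : qint v 0 = 0 := by simp [qint]

lemma qfact_succ (v : RatFunc K) (k : ℕ) : qfact v (k + 1) = qfact v k * qint v (k + 1) :=
  Finset.prod_range_succ _ k

section Algebra

variable {A : Type*} [Ring A] [Algebra (RatFunc K) A] {v : RatFunc K}

lemma dp_natCast (x : A) (k : ℕ) : dp v x k = (qfact v k)⁻¹ • x ^ k := by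
  simp [dp]

lemma dp_of_neg (x : A) {m : ℤ} (hm : m < 0) : dp v x m = 0 := by
  simp [dp, hm]

lemma dp_zero (x : A) : dp v x 0 = 1 := by
  simp [dp, qfact]

lemma mul_dp (hv0 : v ≠ 0) (hv : ∀ n : ℤ, n ≠ 0 → v ^ n ≠ 1) (x : A) (m : ℤ) :
    x * dp v x m = qint v (m + 1) • dp v x (m + 1) := by
  rcases lt_or_ge m 0 with hm | hm
  · obtain hm' | rfl : m + 1 < 0 ∨ m = -1 := by omega
    · rw [dp_of_neg x hm, dp_of_neg x hm', mul_zero, smul_zero]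
    · rw [dp_of_neg x hm, mul_zero, neg_add_cancel, qint_zero, zero_smul]
  · lift m to ℕ using hm
    have hq : qint v ((m : ℤ) + 1) ≠ 0 := qint_ne_zero hv0 hv (by omega)
    rw [← Nat.cast_succ, dp_natCast, dp_natCast, mul_smul_comm, ← pow_succ', qfact_succ,
      smul_smul, mul_inv, Nat.cast_succ, ← mul_assoc, mul_right_comm, mul_inv_cancel₀ hq, one_mul]

variable (v) in
/-- The analogue of Lusztig's `K v^a - K⁻¹ v^{-a}`. -/
def kdiff (ki kt : A) (a : ℤ) : A := v ^ a • ki - v ^ (-a) • kt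

variable {ki kt : A}

lemma kdiff_zero : kdiff v ki kt 0 = ki - kt := by simp [kdiff]

lemma qint_smul_kdiff (hv0 : v ≠ 0) (n a t : ℤ) :
    qint v n • kdiff v ki kt a
      = qint v (n - t) • kdiff v ki kt (a - t) + qint v t • kdiff v ki kt (a + n - t) := by
  have hi : qint v n * v ^ a
      = qint v (n - t) * v ^ (a - t) + qint v t * v ^ (a + n - t) := by
    simp only [qint, zpow_add₀ hv0, zpow_sub₀ hv0, zpow_neg]
    field_simp
    ring
  have ht : qint v n * v ^ (-a)
      = qint v (n - t) * v ^ (-(a - t)) + qint v t * v ^ (-(a + n - t)) := by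
    simp only [qint, zpow_add₀ hv0, zpow_sub₀ hv0, zpow_neg]
    field_simp
    ring
  simp only [kdiff, smul_sub, smul_smul, hi, ht, add_smul]
  abel

lemma commute_kdiff (hkk : Commute ki kt) (a b : ℤ) :
    Commute (kdiff v ki kt a) (kdiff v ki kt b) := by
  unfold kdiff
  have hki : Commute ki (v ^ b • ki - v ^ (-b) • kt) :=
    ((Commute.refl ki).smul_right _).sub_right (hkk.smul_right _)
  have hkt : Commute kt (v ^ b • ki - v ^ (-b) • kt) :=
    (hkk.symm.smul_right _).sub_right ((Commute.refl kt).smul_right _)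
  exact (hki.smul_left _).sub_left (hkt.smul_left _)

lemma semiconjBy_kdiff (hv0 : v ≠ 0) {x : A} {e : ℤ} (hi : ki * x = v ^ e • (x * ki))
    (ht : kt * x = v ^ (-e) • (x * kt)) (a : ℤ) :
    SemiconjBy x (kdiff v ki kt (a + e)) (kdiff v ki kt a) := by
  simp only [SemiconjBy, kdiff, mul_sub, sub_mul, mul_smul_comm, smul_mul_assoc, hi, ht, smul_smul,
    ← zpow_add₀ hv0, neg_add]

variable (v) in
/-- The analogue of Lusztig's `[K; b, t]`: `∏_{s<t} kdiff (b - s)` divided by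
`∏_{s=1}^t (v^s - v^{-s}) = (v - v⁻¹)^t [t]!`. -/
def kbinom (ki kt : A) (b : ℤ) (t : ℕ) : A :=
  ((v - v⁻¹) ^ t * qfact v t)⁻¹ • ((List.range t).map fun s : ℕ => kdiff v ki kt (b - s)).prod

lemma kbinom_zero (b : ℤ) : kbinom v ki kt b 0 = 1 := by
  simp [kbinom, qfact]

lemma kbinom_eq_prod (hv0 : v ≠ 0) (hv : ∀ n : ℤ, n ≠ 0 → v ^ n ≠ 1) (b : ℤ) (t : ℕ) :
    kbinom v ki kt b t = ((List.range t).map fun s : ℕ =>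
      (v ^ ((s : ℤ) + 1) - v ^ (-((s : ℤ) + 1)))⁻¹ • kdiff v ki kt (b - s)).prod := by
  induction t with
  | zero => rw [kbinom_zero, List.range_zero, List.map_nil, List.prod_nil]
  | succ t ih =>
    rw [List.prod_range_succ, ← ih, kbinom, kbinom, List.prod_range_succ, smul_mul_smul_comm,
      ← sub_inv_mul_qint hv0 hv, pow_succ, qfact_succ, ← mul_inv]
    congr 2
    ring

lemma semiconjBy_kbinom (hv0 : v ≠ 0) {x : A} {e : ℤ} (hi : ki * x = v ^ e • (x * ki))
    (ht : kt * x = v ^ (-e) • (x * kt)) (b : ℤ) (t : ℕ) :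
    SemiconjBy x (kbinom v ki kt (b + e) t) (kbinom v ki kt b t) := by
  refine SemiconjBy.smul_right ?_ _
  induction t with
  | zero => exact SemiconjBy.one_right x
  | succ t ih =>
    rw [List.prod_range_succ, List.prod_range_succ, add_sub_right_comm]
    exact ih.mul_right (semiconjBy_kdiff hv0 hi ht _)

lemma kbinom_pascal (hv0 : v ≠ 0) (hv : ∀ n : ℤ, n ≠ 0 → v ^ n ≠ 1) (hkk : Commute ki kt)
    (n b : ℤ) (t : ℕ) :
    qint v n • kbinom v ki kt (b + 1) (t + 1)
      = qint v (n - (t + 1)) • kbinom v ki kt b (t + 1)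
        + (v - v⁻¹)⁻¹ • (kdiff v ki kt (b + n - t) * kbinom v ki kt b t) := by
  have hfront : ((List.range (t + 1)).map fun s : ℕ => kdiff v ki kt (b + 1 - s)).prod
      = kdiff v ki kt (b + 1) * ((List.range t).map fun s : ℕ => kdiff v ki kt (b - s)).prod := by
    rw [List.prod_range_succ']
    simp only [Nat.cast_zero, sub_zero, Nat.cast_succ, add_sub_add_right_eq_sub]
  have hback : ((List.range (t + 1)).map fun s : ℕ => kdiff v ki kt (b - s)).prod
      = kdiff v ki kt (b - t) * ((List.range t).map fun s : ℕ => kdiff v ki kt (b - s)).prod := by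
    rw [List.prod_range_succ]
    refine (Commute.list_prod_right _ _ fun y hy => ?_).symm.eq
    obtain ⟨s, -, rfl⟩ := List.mem_map.1 hy
    exact commute_kdiff hkk _ _
  have hD : ((v - v⁻¹) ^ (t + 1) * qfact v (t + 1))⁻¹ * qint v (t + 1)
      = (v - v⁻¹)⁻¹ * ((v - v⁻¹) ^ t * qfact v t)⁻¹ := by
    have := qint_ne_zero hv0 hv (n := t + 1) (by omega)
    rw [pow_succ, qfact_succ]
    field_simp
  have key := qint_smul_kdiff (ki := ki) (kt := kt) hv0 n (b + 1) (t + 1)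
  rw [add_sub_add_right_eq_sub, show b + 1 + n - (t + 1) = b + n - t by ring] at key
  unfold kbinom
  rw [hfront, hback]
  generalize ((List.range t).map fun s : ℕ => kdiff v ki kt (b - s)).prod = P
  generalize ((v - v⁻¹) ^ (t + 1) * qfact v (t + 1))⁻¹ = D' at hD ⊢
  have := congrArg (fun y => D' • (y * P)) key
  simp only [add_mul, smul_mul_assoc, smul_add, smul_smul] at this
  rw [mul_smul_comm]
  simp only [smul_smul]
  rw [← hD, mul_comm (qint v n), mul_comm (qint v (n - _)), this]

variable {Bi Bt : A} (hv0 : v ≠ 0) (hv : ∀ n : ℤ, n ≠ 0 → v ^ n ≠ 1) (hkk : Commute ki kt)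
  (h1 : ki * Bi = v ^ (-2 : ℤ) • (Bi * ki)) (h2 : kt * Bt = v ^ (-2 : ℤ) • (Bt * kt))
  (h3 : kt * Bi = v ^ (2 : ℤ) • (Bi * kt)) (h4 : ki * Bt = v ^ (2 : ℤ) • (Bt * ki))
  (h5 : Bt * Bi - Bi * Bt = (v - v⁻¹)⁻¹ • (ki - kt))

include hv0 hv h1 h3 h5 in
lemma mul_pow_succ_of_commutator (k : ℕ) :
    Bt * Bi ^ (k + 1) = Bi ^ (k + 1) * Bt
      + ((v - v⁻¹)⁻¹ * qint v (k + 1)) • (Bi ^ k * kdiff v ki kt (-k)) := by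
  have hcomm : Bt * Bi = Bi * Bt + (v - v⁻¹)⁻¹ • kdiff v ki kt 0 := by
    rw [kdiff_zero, ← h5, add_sub_cancel]
  have hsemi : ∀ a, SemiconjBy Bi (kdiff v ki kt (a + -2)) (kdiff v ki kt a) :=
    semiconjBy_kdiff hv0 h1 (by rwa [neg_neg])
  induction k with
  | zero => simp [hcomm, qint_one hv0 hv]
  | succ k ih =>
    have key := qint_smul_kdiff (ki := ki) (kt := kt) hv0 (k + 2) (-(k + 1)) 1
    rw [qint_one hv0 hv, one_smul, show (k : ℤ) + 2 - 1 = k + 1 by ring,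
      show -((k : ℤ) + 1) - 1 = -k + -2 by ring,
      show -((k : ℤ) + 1) + (k + 2) - 1 = 0 by ring] at key
    rw [pow_succ _ (k + 1), ← mul_assoc, ih, add_mul, mul_assoc, hcomm, smul_mul_assoc, mul_assoc,
      ← (hsemi _).eq, ← mul_assoc (Bi ^ k), ← pow_succ, mul_add, ← mul_assoc]
    push_cast
    rw [add_assoc (k : ℤ), one_add_one_eq_two, ← smul_smul _ (qint v (k + 2)),
      ← mul_smul_comm (qint v (k + 2)), key]
    simp only [mul_add, smul_add, mul_smul_comm, smul_smul]
    abel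

include hv0 hv h1 h3 h5 in
lemma mul_dp_of_commutator (m : ℤ) :
    Bt * dp v Bi m = dp v Bi m * Bt
      + (v - v⁻¹)⁻¹ • (dp v Bi (m - 1) * kdiff v ki kt (1 - m)) := by
  obtain ⟨k, rfl⟩ | hm : (∃ k : ℕ, m = k + 1) ∨ m ≤ 0 := by
    rcases le_or_gt m 0 with hm | hm
    · exact .inr hm
    · exact .inl ⟨(m - 1).toNat, by omega⟩
  · have hq : qint v ((k : ℤ) + 1) ≠ 0 := qint_ne_zero hv0 hv (by omega)
    rw [add_sub_cancel_right, show 1 - ((k : ℤ) + 1) = -k by ring, ← Nat.cast_succ, dp_natCast,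
      dp_natCast, mul_smul_comm, mul_pow_succ_of_commutator hv0 hv h1 h3 h5, smul_add,
      smul_mul_assoc, smul_mul_assoc, smul_smul, smul_smul, qfact_succ]
    congr 2
    field_simp
  · rw [dp_of_neg Bi (by omega : m - 1 < 0), zero_mul, smul_zero, add_zero]
    rcases hm.lt_or_eq with hm | rfl
    · rw [dp_of_neg Bi hm, mul_zero, zero_mul]
    · rw [dp_zero, mul_one, one_mul]

variable (v) in
def dpTerm (Bi Bt ki kt : A) (n m : ℤ) (t : ℕ) : A :=
  dp v Bi (m - t) * kbinom v ki kt (2 * t - n - m) t * dp v Bt (n - t)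

include hv0 hv h1 h2 h3 h4 h5 in
lemma mul_dpTerm (n m : ℤ) (t : ℕ) :
    Bt * dpTerm v Bi Bt ki kt n m t
      = qint v (n - t + 1) •
          (dp v Bi (m - t) * kbinom v ki kt (2 * t - n - m - 2) t * dp v Bt (n - t + 1))
        + (v - v⁻¹)⁻¹ • (dp v Bi (m - t - 1) *
          (kdiff v ki kt (1 - (m - t)) * kbinom v ki kt (2 * t - n - m) t) * dp v Bt (n - t)) := by
  have hsemi := semiconjBy_kbinom hv0 h4 h2 (2 * t - n - m - 2) t
  rw [sub_add_cancel] at hsemi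
  rw [dpTerm, ← mul_assoc, ← mul_assoc, mul_dp_of_commutator hv0 hv h1 h3 h5, add_mul, add_mul,
    mul_assoc _ Bt, hsemi.eq, ← mul_assoc, mul_assoc _ Bt, mul_dp hv0 hv, mul_smul_comm,
    smul_mul_assoc, smul_mul_assoc]
  simp only [mul_assoc]

include hv0 hv hkk in
/-- The right-hand side is written with the casts `((t + 1 : ℕ) : ℤ)` of the summands of
`mul_dpTerm` at `t + 1`, so that the two can be matched after shifting the summation index. -/
lemma qint_smul_dpTerm_succ (n m : ℤ) (t : ℕ) :
    qint v (n + 1) • dpTerm v Bi Bt ki kt (n + 1) m (t + 1)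
      = qint v (n - ((t + 1 : ℕ) : ℤ) + 1) • (dp v Bi (m - ((t + 1 : ℕ) : ℤ)) *
          kbinom v ki kt (2 * ((t + 1 : ℕ) : ℤ) - n - m - 2) (t + 1) *
          dp v Bt (n - ((t + 1 : ℕ) : ℤ) + 1))
        + (v - v⁻¹)⁻¹ • (dp v Bi (m - t - 1) *
          (kdiff v ki kt (1 - (m - t)) * kbinom v ki kt (2 * t - n - m) t) * dp v Bt (n - t)) := by
  have hp := kbinom_pascal hv0 hv hkk (n + 1) (2 * t - n - m) t
  rw [show n + 1 - ((t : ℤ) + 1) = n - t by ring,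
    show 2 * (t : ℤ) - n - m + (n + 1) - t = 1 - (m - t) by ring] at hp
  rw [dpTerm]
  push_cast
  rw [show m - ((t : ℤ) + 1) = m - t - 1 by ring,
    show 2 * ((t : ℤ) + 1) - (n + 1) - m = 2 * t - n - m + 1 by ring,
    show n + 1 - ((t : ℤ) + 1) = n - t by ring, show n - ((t : ℤ) + 1) + 1 = n - t by ring,
    show 2 * ((t : ℤ) + 1) - n - m - 2 = 2 * t - n - m by ring,
    ← smul_mul_assoc, ← mul_smul_comm, hp, mul_add, add_mul, mul_smul_comm, smul_mul_assoc,
    mul_smul_comm, smul_mul_assoc]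

include hv0 hv hkk h1 h2 h3 h4 h5 in
lemma dp_mul_dp_eq_sum (M : ℤ) (N : ℕ) :
    dp v Bt N * dp v Bi M = ∑ t ∈ Finset.range (N + 1), dpTerm v Bi Bt ki kt N M t := by
  induction N with
  | zero => simp [dpTerm, kbinom_zero, dp_zero]
  | succ N ih =>
    have hq : qint v ((N : ℤ) + 1) ≠ 0 := qint_ne_zero hv0 hv (by omega)
    apply smul_right_injective A hq
    simp only [Nat.cast_succ]
    rw [← smul_mul_assoc, ← mul_dp hv0 hv, mul_assoc, ih, Finset.mul_sum,
      Finset.sum_congr rfl fun t _ => mul_dpTerm hv0 hv h1 h2 h3 h4 h5 N M t,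
      Finset.sum_range_add_shift _ _ _ (by simp [qint_zero]), Finset.sum_range_succ' _ (N + 1),
      smul_add, Finset.smul_sum, add_comm]
    -- `congr` closes the `t = 0` summands by unfolding `kbinom _ 0`
    congr 1
    exact Finset.sum_congr rfl fun t _ => (qint_smul_dpTerm_succ hv0 hv hkk N M t).symm

end Algebra

end IQuantum

theorem stmt9_general {K : Type*} [Field K]
    {A : Type*} [Ring A] [Algebra (RatFunc K) A]
    (ε : ℕ) (hε : 0 < ε) (v : RatFunc K) (hv : v = RatFunc.X ^ ε)
    (Bi Bt ki kt : A)
    (hkk : ki * kt = kt * ki)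
    (h1 : ki * Bi = v ^ (-2 : ℤ) • (Bi * ki))
    (h2 : kt * Bt = v ^ (-2 : ℤ) • (Bt * kt))
    (h3 : kt * Bi = v ^ (2 : ℤ) • (Bi * kt))
    (h4 : ki * Bt = v ^ (2 : ℤ) • (Bt * ki))
    (h5 : Bt * Bi - Bi * Bt = (v - v⁻¹)⁻¹ • (ki - kt))
    (N M : ℕ) :
    dp v Bt (N : ℤ) * dp v Bi (M : ℤ)
      = ∑ t ∈ Finset.range (min M N + 1),
          dp v Bi ((M : ℤ) - (t : ℤ)) *
            ((List.range t).map fun s =>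
              (v ^ ((s : ℤ) + 1) - v ^ (-((s : ℤ) + 1)))⁻¹ •
                (v ^ (2 * (t : ℤ) - (N : ℤ) - (M : ℤ) - (s : ℤ)) • ki
                  - v ^ (-(2 * (t : ℤ)) + (N : ℤ) + (M : ℤ) + (s : ℤ)) • kt)).prod *
            dp v Bt ((N : ℤ) - (t : ℤ)) := by
  have hv0 : v ≠ 0 := hv ▸ pow_ne_zero _ RatFunc.X_ne_zero
  have hvn : ∀ n : ℤ, n ≠ 0 → v ^ n ≠ 1 := fun n hn => by
    rw [hv, ← zpow_natCast, ← zpow_mul]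
    exact RatFunc.X_zpow_ne_one (mul_ne_zero (by exact_mod_cast hε.ne') hn)
  rw [IQuantum.dp_mul_dp_eq_sum hv0 hvn hkk h1 h2 h3 h4 h5,
    ← Finset.sum_subset (Finset.range_subset_range.2 (by omega : min M N + 1 ≤ N + 1))]
  · refine Finset.sum_congr rfl fun t _ => ?_
    rw [IQuantum.dpTerm, IQuantum.kbinom_eq_prod hv0 hvn]
    congr 2
    -- the statement's `List.range t` is coerced to `List ℤ` through the list monad
    rw [show (do let a ← List.range t; pure (a : ℤ)) = (List.range t).map (↑) from
      List.flatMap_pure_eq_map _ _, List.map_map]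
    refine congrArg List.prod (List.map_congr_left fun s _ => ?_)
    rw [Function.comp_apply, IQuantum.kdiff,
      show -(2 * (t : ℤ) - N - M - s) = -(2 * t) + N + M + s by ring]
  · intro t ht' ht
    rw [Finset.mem_range] at ht ht'
    rw [IQuantum.dpTerm, IQuantum.dp_of_neg _ (by omega), zero_mul, zero_mul]

/-- (Corollary 3.3, first identity; analogue of Lusztig's Corollary 3.1.9.)
For all N, M ≥ 0:
B_{τi}^{(N)} B_i^{(M)} = ∑_{t=0}^{min(M,N)} B_i^{(M−t)}
  ( ∏_{s=1}^{t} (q_i^{2t−N−M−s+1} k̃_i − q_i^{−2t+N+M+s−1} k̃_{τi}) / (q_i^s − q_i^{−s}) )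
  B_{τi}^{(N−t)}. -/
theorem stmt9 {K : Type*} [Field K] [CharZero K]
    {A : Type*} [Ring A] [Algebra (RatFunc K) A]
    (ε : ℕ) (hε : 0 < ε) (v : RatFunc K) (hv : v = RatFunc.X ^ ε)
    (Bi Bt ki kt : A)
    (hkk : ki * kt = kt * ki)
    (h1 : ki * Bi = v ^ (-2 : ℤ) • (Bi * ki))
    (h2 : kt * Bt = v ^ (-2 : ℤ) • (Bt * kt))
    (h3 : kt * Bi = v ^ (2 : ℤ) • (Bi * kt))
    (h4 : ki * Bt = v ^ (2 : ℤ) • (Bt * ki))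
    (h5 : Bt * Bi - Bi * Bt = (v - v⁻¹)⁻¹ • (ki - kt))
    (N M : ℕ) :
    dp v Bt (N : ℤ) * dp v Bi (M : ℤ)
      = ∑ t ∈ Finset.range (min M N + 1),
          dp v Bi ((M : ℤ) - (t : ℤ)) *
            ((List.range t).map fun s =>
              (v ^ ((s : ℤ) + 1) - v ^ (-((s : ℤ) + 1)))⁻¹ •
                (v ^ (2 * (t : ℤ) - (N : ℤ) - (M : ℤ) - (s : ℤ)) • ki
                  - v ^ (-(2 * (t : ℤ)) + (N : ℤ) + (M : ℤ) + (s : ℤ)) • kt)).prod *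
            dp v Bt ((N : ℤ) - (t : ℤ)) :=
  stmt9_general ε hε v hv Bi Bt ki kt hkk h1 h2 h3 h4 h5 N M
end
end

section
/- (Proposition 3.4, case n = 1.) For every integer m > −c_{ij} and every e ∈ {1, −1}: ∑_{r+s=m, r,s≥0} (−1)^r q_i^{er(−c_{ij}−m+1)} B_i^{(r)} B_j B_i^{(s)} = 0. (In the universal quasi-split ıquantum group Ũ^ı this applies whenever i, τi, j ∈ I are pairwise distinct, since then B_i and B_j satisfy the quantum Serre relation below.) -/
noncomputable section

/-!
Write `S_M` for the left-hand side with `m = M`. Moving `B_i` across a divided power,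
`B_i^{(n)} B_i = B_i B_i^{(n)} = [n+1] B_i^{(n+1)}`, and using the identity
`v^{ep} [q] + v^{-eq} [p] = [p+q]` (valid for `e = ±1`) coefficientwise gives the recursion
`[M+1] S_{M+1} = S_M B_i - q_i^{e(-c_{ij}-2M)} B_i S_M`.
Since `S_{1-c_{ij}}` is the quantum Serre relation and `[M+1] ≠ 0` (`q_i` is not a root of unity),
induction on `M` gives `S_M = 0` for all `M ≥ 1 - c_{ij}`.
-/

section QuantumIntegers

variable {K : Type*} [Field K] {v : RatFunc K}

@[simp]
lemma qint_zero : qint v 0 = 0 := by simp [qint]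

lemma qint_add (hv : v ≠ 0) (p q : ℤ) :
    v ^ p * qint v q + v ^ (-q) * qint v p = qint v (p + q) := by
  simp only [qint, zpow_add₀ hv, zpow_neg]
  ring

lemma zpow_mul_qint_add {e : ℤ} (he : e = 1 ∨ e = -1) (hv : v ≠ 0) (p q : ℤ) :
    v ^ (e * p) * qint v q + v ^ (-(e * q)) * qint v p = qint v (p + q) := by
  rcases he with rfl | rfl
  · simpa using qint_add hv p q
  · rw [neg_one_mul, neg_one_mul, neg_neg, add_comm p q, ← qint_add hv q p]
    ring

lemma qint_natCast_ne_zero (hv₀ : v ≠ 0) (hv : ¬IsOfFinOrder v) {n : ℕ} (hn : n ≠ 0) :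
    qint v n ≠ 0 := by
  have key : ∀ k : ℕ, k ≠ 0 → v ^ (k : ℤ) - v ^ (-(k : ℤ)) ≠ 0 := by
    intro k hk h
    have hk' : v ^ k = (v ^ k)⁻¹ := by simpa [sub_eq_zero] using h
    refine hv (isOfFinOrder_iff_pow_eq_one.mpr ⟨2 * k, by omega, ?_⟩)
    rw [two_mul, pow_add]
    nth_rewrite 1 [hk']
    exact inv_mul_cancel₀ (pow_ne_zero _ hv₀)
  exact div_ne_zero (key n hn) (by simpa using key 1 one_ne_zero)

lemma qfact_succ (n : ℕ) :
    qfact v (n + 1) = qfact v n * qint v (n + 1) :=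
  Finset.prod_range_succ _ _

end QuantumIntegers

lemma RatFunc.not_isOfFinOrder_X_pow {K : Type*} [Field K] {n : ℕ} (hn : n ≠ 0) :
    ¬IsOfFinOrder (RatFunc.X ^ n : RatFunc K) := by
  refine isOfFinOrder_pow.not.mpr (not_or.mpr ⟨fun h => ?_, hn⟩)
  obtain ⟨k, hk, hX⟩ := isOfFinOrder_iff_pow_eq_one.mp h
  rw [← RatFunc.algebraMap_X, ← map_pow, ← map_one (algebraMap (Polynomial K) _)] at hX
  simpa [hk.ne'] using congrArg Polynomial.natDegree (RatFunc.algebraMap_injective K hX)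

open Finset

section DividedPowers

variable {K : Type*} [Field K] {A : Type*} [Ring A] [Algebra (RatFunc K) A] {v : RatFunc K}

lemma dp_natCast (x : A) (n : ℕ) : dp v x n = (qfact v n)⁻¹ • x ^ n := by
  simp [dp]

lemma dp_mul_self (x : A) {n : ℤ} (hn : 0 ≤ n) (hq : qint v (n + 1) ≠ 0) :
    dp v x n * x = qint v (n + 1) • dp v x (n + 1) := by
  lift n to ℕ using hn
  rw [dp_natCast, ← Nat.cast_succ, dp_natCast, qfact_succ, smul_mul_assoc, ← pow_succ,
    smul_smul, mul_inv, mul_left_comm, Nat.cast_succ, mul_inv_cancel₀ hq, mul_one]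

lemma self_mul_dp (x : A) {n : ℤ} (hn : 0 ≤ n) (hq : qint v (n + 1) ≠ 0) :
    x * dp v x n = qint v (n + 1) • dp v x (n + 1) := by
  lift n to ℕ using hn
  rw [dp_natCast, ← Nat.cast_succ, dp_natCast, qfact_succ, mul_smul_comm, ← pow_succ',
    smul_smul, mul_inv, mul_left_comm, Nat.cast_succ, mul_inv_cancel₀ hq, mul_one]

end DividedPowers

section SerreSum

variable {K : Type*} [Field K] {A : Type*} [Ring A] [Algebra (RatFunc K) A]

def serreCoeff (v : RatFunc K) (e d : ℤ) (M r : ℕ) : RatFunc K :=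
  (-1) ^ r * v ^ (e * r * (d - M + 1))

/-- `S_M` of the proof, with `d = -c_{ij}`. -/
def serreSum (v : RatFunc K) (e d : ℤ) (x y : A) (M : ℕ) : A :=
  ∑ r ∈ range (M + 1), serreCoeff v e d M r • (dp v x r * y * dp v x (M - r))

variable {v : RatFunc K}

lemma serreCoeff_zero (e d : ℤ) (M : ℕ) : serreCoeff v e d M 0 = 1 := by
  simp [serreCoeff]

lemma qint_mul_serreCoeff_succ {e : ℤ} (he : e = 1 ∨ e = -1) (hv : v ≠ 0) (d : ℤ)
    (M r : ℕ) :
    qint v (M + 1) * serreCoeff v e d (M + 1) (r + 1) =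
      serreCoeff v e d M (r + 1) * qint v (M - r) -
        v ^ (e * (d - 2 * M)) * (serreCoeff v e d M r * qint v (r + 1)) := by
  have hsum := zpow_mul_qint_add he hv ((r : ℤ) + 1) (M - r)
  have h₁ : v ^ (e * ((r : ℤ) + 1) * (d - M + 1)) =
      v ^ (e * ((r : ℤ) + 1) * (d - M)) * v ^ (e * ((r : ℤ) + 1)) := by
    rw [← zpow_add₀ hv]; ring_nf
  have h₂ : v ^ (e * (d - 2 * M)) * v ^ (e * r * (d - M + 1)) =
      v ^ (e * ((r : ℤ) + 1) * (d - M)) * v ^ (-(e * (M - r))) := by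
    rw [← zpow_add₀ hv, ← zpow_add₀ hv]; ring_nf
  simp only [serreCoeff]
  push_cast
  rw [show (M : ℤ) + 1 = (r + 1) + (M - r) by ring, ← hsum,
    show d - ((r : ℤ) + 1 + (M - r)) + 1 = d - M by ring]
  linear_combination (-1 : RatFunc K) ^ (r + 1) * (-qint v (M - r) * h₁ - qint v (r + 1) * h₂)

variable (hq : ∀ n : ℕ, qint v (n + 1) ≠ 0) (x y : A)
include hq

lemma serreSum_mul_self (e d : ℤ) (M : ℕ) :
    serreSum v e d x y M * x = ∑ r ∈ range (M + 2),
      (serreCoeff v e d M r * qint v (M - r + 1)) • (dp v x r * y * dp v x (M + 1 - r)) := by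
  rw [sum_range_succ, Nat.cast_succ, sub_add_cancel_left, neg_add_cancel, qint_zero, mul_zero,
    zero_smul, add_zero, serreSum, sum_mul]
  refine sum_congr rfl fun r hr => ?_
  have hr : r ≤ M := mem_range_succ_iff.mp hr
  have hq' : qint v (M - r + 1) ≠ 0 := by simpa [Nat.cast_sub hr] using hq (M - r)
  rw [smul_mul_assoc, mul_assoc, dp_mul_self x (by omega) hq', mul_smul_comm, smul_smul,
    sub_add_eq_add_sub]

lemma self_mul_serreSum (e d : ℤ) (M : ℕ) :
    x * serreSum v e d x y M = ∑ r ∈ range (M + 1),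
      (serreCoeff v e d M r * qint v (r + 1)) • (dp v x (r + 1) * y * dp v x (M - r)) := by
  rw [serreSum, mul_sum]
  refine sum_congr rfl fun r _ => ?_
  rw [mul_smul_comm, ← mul_assoc, ← mul_assoc, self_mul_dp x (by omega) (hq r), smul_mul_assoc,
    smul_mul_assoc, smul_smul]

lemma qint_smul_serreSum_succ {e : ℤ} (he : e = 1 ∨ e = -1) (hv : v ≠ 0) (d : ℤ) (M : ℕ) :
    qint v (M + 1) • serreSum v e d x y (M + 1) =
      serreSum v e d x y M * x - v ^ (e * (d - 2 * M)) • (x * serreSum v e d x y M) := by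
  rw [serreSum_mul_self hq, self_mul_serreSum hq, serreSum, smul_sum, smul_sum,
    sum_range_succ', sum_range_succ' _ (M + 1), add_sub_right_comm, ← sum_sub_distrib]
  congr 1
  · refine sum_congr rfl fun r _ => ?_
    have h₁ : (M : ℤ) + 1 - (r + 1) = M - r := by ring
    have h₂ : (M : ℤ) - (r + 1) + 1 = M - r := by ring
    push_cast
    rw [smul_smul, smul_smul, h₁, h₂, ← sub_smul, qint_mul_serreCoeff_succ he hv]
  · simp [serreCoeff_zero]

lemma serreSum_eq_zero_of_le {e : ℤ} (he : e = 1 ∨ e = -1) (hv : v ≠ 0) (d : ℤ)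
    {M₀ M : ℕ} (h₀ : serreSum v e d x y M₀ = 0) (hM : M₀ ≤ M) :
    serreSum v e d x y M = 0 := by
  induction M, hM using Nat.le_induction with
  | base => exact h₀
  | succ M _ ih =>
    have h := qint_smul_serreSum_succ hq x y he hv d M
    rw [ih, zero_mul, mul_zero, smul_zero, sub_zero] at h
    exact (smul_eq_zero.mp h).resolve_left (by simpa using hq M)

end SerreSum

theorem stmt11_general {K : Type*} [Field K]
    {A : Type*} [Ring A] [Algebra (RatFunc K) A]
    (ε : ℕ) (hε : 0 < ε) (v : RatFunc K) (hv : v = RatFunc.X ^ ε)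
    (Bi Bj : A) (c : ℤ) (hc : c ≤ 0)
    (hserre : ∑ n ∈ Finset.range ((1 - c).toNat + 1),
        ((-1 : RatFunc K) ^ n) • (dp v Bi (n : ℤ) * Bj * dp v Bi (1 - c - (n : ℤ))) = 0)
    (m : ℕ) (hm : -c < (m : ℤ)) (e : ℤ) (he : e = 1 ∨ e = -1) :
    ∑ r ∈ Finset.range (m + 1),
        ((-1 : RatFunc K) ^ r * v ^ (e * (r : ℤ) * (-c - (m : ℤ) + 1))) •
          (dp v Bi (r : ℤ) * Bj * dp v Bi ((m : ℤ) - (r : ℤ))) = 0 := by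
  have hv₀ : v ≠ 0 := hv ▸ pow_ne_zero _ RatFunc.X_ne_zero
  have hq (n : ℕ) : qint v (n + 1) ≠ 0 := by
    simpa using qint_natCast_ne_zero hv₀ (hv ▸ RatFunc.not_isOfFinOrder_X_pow hε.ne')
      n.succ_ne_zero
  have hM₀ : ((1 - c).toNat : ℤ) = 1 - c := by omega
  have hbase : serreSum v e (-c) Bi Bj (1 - c).toNat = 0 := by
    rw [← hserre, serreSum]
    refine sum_congr rfl fun r _ => ?_
    rw [serreCoeff, hM₀, show -c - (1 - c) + 1 = 0 by ring, mul_zero, zpow_zero, mul_one]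
  exact serreSum_eq_zero_of_le hq Bi Bj he hv₀ (-c) hbase (by omega)

/-- (Proposition 3.4, case n = 1.) Assuming the quantum Serre relation
∑_{n=0}^{1−c_{ij}} (−1)^n B_i^{(n)} B_j B_i^{(1−c_{ij}−n)} = 0, for every m > −c_{ij}
and e ∈ {1, −1}: ∑_{r+s=m} (−1)^r q_i^{er(−c_{ij}−m+1)} B_i^{(r)} B_j B_i^{(s)} = 0. -/
theorem stmt11 {K : Type*} [Field K] [CharZero K]
    {A : Type*} [Ring A] [Algebra (RatFunc K) A]
    (ε : ℕ) (hε : 0 < ε) (v : RatFunc K) (hv : v = RatFunc.X ^ ε)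
    (Bi Bj : A) (c : ℤ) (hc : c ≤ 0)
    (hserre : ∑ n ∈ Finset.range ((1 - c).toNat + 1),
        ((-1 : RatFunc K) ^ n) • (dp v Bi (n : ℤ) * Bj * dp v Bi (1 - c - (n : ℤ))) = 0)
    (m : ℕ) (hm : -c < (m : ℤ)) (e : ℤ) (he : e = 1 ∨ e = -1) :
    ∑ r ∈ Finset.range (m + 1),
        ((-1 : RatFunc K) ^ r * v ^ (e * (r : ℤ) * (-c - (m : ℤ) + 1))) •
          (dp v Bi (r : ℤ) * Bj * dp v Bi ((m : ℤ) - (r : ℤ))) = 0 :=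
  stmt11_general ε hε v hv Bi Bj c hc hserre m hm e he
end
end

section
/- (Bar-invariance of the ıdivided powers; a claim in the proof of Lemma 2.4(a).) The automorphism ψ fixes every ıdivided power: ψ(B_{p̄}^{(m)}) = B_{p̄}^{(m)} for every integer m ≥ 0 and every parity p̄ ∈ {0̄, 1̄}. -/
/-!
(Bar-invariance of the ıdivided powers; a claim in the proof of Lemma 2.4(a).)
In the polynomial ring R = F[B, K] (realized as `MvPolynomial (Fin 2) (RatFunc K)`
with B = X 0 and K = X 1), the ring automorphism ψ fixing 𝕂, sending q ↦ q⁻¹,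
B ↦ B and K ↦ q_i² K fixes every ıdivided power B_{p̄}^{(m)}.
-/

noncomputable section

/-- The ıdivided power `B_{p̄}^{(m)}` in `F[B, K]`:
`B_{1̄}^{(2k+1)} = (1/[2k+1]!) B ∏_{j=1}^{k} (B² − q_i K [2j−1]²)`,
`B_{1̄}^{(2k)} = (1/[2k]!) ∏_{j=1}^{k} (B² − q_i K [2j−1]²)`,
`B_{0̄}^{(2k+1)} = (1/[2k+1]!) B ∏_{j=1}^{k} (B² − q_i K [2j]²)`,
`B_{0̄}^{(2k)} = (1/[2k]!) ∏_{j=1}^{k} (B² − q_i K [2j−2]²)`. -/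
def idp {K : Type*} [Field K] (v : RatFunc K) (p : ZMod 2) (m : ℕ) :
    MvPolynomial (Fin 2) (RatFunc K) :=
  (qfact v m)⁻¹ •
    ((if m % 2 = 1 then MvPolynomial.X 0 else 1) *
      ∏ j ∈ Finset.range (m / 2),
        ((MvPolynomial.X 0) ^ 2 -
          (v * (qint v (if p = 1 then 2 * (j : ℤ) + 1
              else if m % 2 = 1 then 2 * (j : ℤ) + 2 else 2 * (j : ℤ))) ^ 2) •
            MvPolynomial.X 1))

theorem stmt14 {K : Type*} [Field K] [CharZero K]
    (ε : ℕ) (hε : 0 < ε) (v : RatFunc K) (hv : v = RatFunc.X ^ ε)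
    (bar : RatFunc K ≃+* RatFunc K)
    (hbarC : ∀ a : K, bar (RatFunc.C a) = RatFunc.C a)
    (hbarX : bar RatFunc.X = RatFunc.X⁻¹)
    (ψ : MvPolynomial (Fin 2) (RatFunc K) ≃+* MvPolynomial (Fin 2) (RatFunc K))
    (hψC : ∀ f : RatFunc K, ψ (MvPolynomial.C f) = MvPolynomial.C (bar f))
    (hψB : ψ (MvPolynomial.X 0) = MvPolynomial.X 0)
    (hψK : ψ (MvPolynomial.X 1) = MvPolynomial.C (v ^ 2) * MvPolynomial.X 1) :
    ∀ (p : ZMod 2) (m : ℕ), ψ (idp v p m) = idp v p m := by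
  have hv0 : v ≠ 0 := by
    rw [hv]; exact pow_ne_zero _ RatFunc.X_ne_zero
  have hbarv : bar v = v⁻¹ := by rw [hv, map_pow, hbarX, inv_pow]
  have hbarqint : ∀ n : ℤ, bar (qint v n) = qint v n := by
    intro n
    simp only [qint, map_div₀, map_sub, map_zpow₀, map_inv₀, hbarv, inv_inv, inv_zpow,
      ← zpow_neg, neg_neg]
    rw [show v ^ (-n) - v ^ n = -(v ^ n - v ^ (-n)) by ring,
      show v⁻¹ - v = -(v - v⁻¹) by ring, neg_div_neg_eq]
  have hbarqfact : ∀ m : ℕ, bar (qfact v m) = qfact v m := by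
    intro m; simp [qfact, map_prod, hbarqint]
  have hsc : ∀ n : ℤ, bar (v * qint v n ^ 2) * v ^ 2 = v * qint v n ^ 2 := by
    intro n
    rw [map_mul, map_pow, hbarqint, hbarv]
    field_simp
  have hfac : ∀ n : ℤ,
      ψ ((MvPolynomial.X 0 : MvPolynomial (Fin 2) (RatFunc K)) ^ 2 -
        (v * qint v n ^ 2) • MvPolynomial.X 1)
      = (MvPolynomial.X 0) ^ 2 - (v * qint v n ^ 2) • MvPolynomial.X 1 := by
    intro n
    rw [map_sub, map_pow, hψB, MvPolynomial.smul_eq_C_mul, map_mul, hψC, hψK,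
      ← mul_assoc, ← MvPolynomial.C_mul, hsc]
  intro p m
  simp only [idp]
  rw [MvPolynomial.smul_eq_C_mul, map_mul, hψC, map_inv₀, hbarqfact, map_mul,
    apply_ite ψ, hψB, map_one, map_prod]
  congr 1
  congr 1
  exact Finset.prod_congr rfl fun j _ => hfac _
end
end
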